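/- Let ρ ∈ [1,2). Then there exists a constant C > 0 such that for all t ∈ (0,∞): ( ∫_0^{e^t − 1} |K1(x,t)|^ρ dx )^{1/ρ} ≤ C (1 + t) (e^t − 1)^{1/ρ − 1} (1 − e^{−t}). -/

import Mathlib

open MeasureTheory Real intervalIntegral

/-- Rising factorial (Pochhammer symbol) `(q)_n = q (q+1) ⋯ (q+n−1)`. -/
noncomputable def risingFactorial (q : ℝ) : ℕ → ℝ
  | 0 => 1
  | n + 1 => risingFactorial q n * (q + (n : ℝ))

/-- The Gauss hypergeometric function `F(a,b;c;x)` defined by its power series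
`∑ ((a)_n (b)_n / ((c)_n n!)) x^n`. -/
noncomputable def hyperF (a b c x : ℝ) : ℝ :=
  ∑' n : ℕ, (risingFactorial a n * risingFactorial b n) /
    (risingFactorial c n * (Nat.factorial n : ℝ)) * x ^ n

/-- The kernel `K1(z,t) = ((1+e^t)²−z²)^{−1/2} F(1/2,1/2;1;((e^t−1)²−z²)/((e^t+1)²−z²))`. -/
noncomputable def K1 (z t : ℝ) : ℝ :=
  ((1 + Real.exp t) ^ 2 - z ^ 2) ^ (-(1 : ℝ) / 2) *
    hyperF (1 / 2) (1 / 2) 1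
      (((Real.exp t - 1) ^ 2 - z ^ 2) / ((Real.exp t + 1) ^ 2 - z ^ 2))

/-- The kernel `K0(z,t)`. -/
noncomputable def K0 (z t : ℝ) : ℝ :=
  -(1 / (2 * ((Real.exp t - 1) ^ 2 - z ^ 2) * Real.sqrt ((Real.exp t + 1) ^ 2 - z ^ 2))) *
    ((1 - Real.exp (2 * t) + z ^ 2) *
        hyperF (-(1 / 2)) (1 / 2) 1
          (((Real.exp t - 1) ^ 2 - z ^ 2) / ((Real.exp t + 1) ^ 2 - z ^ 2))
      + 2 * (Real.exp t - 1) *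
        hyperF (1 / 2) (1 / 2) 1
          (((Real.exp t - 1) ^ 2 - z ^ 2) / ((Real.exp t + 1) ^ 2 - z ^ 2)))

/-!
For `0 ≤ x ≤ e^t - 1` the argument `m` of `F` lies in `[0, 1)` and
`1 - m = 4e^t / ((e^t + 1)² - x²) ≥ e^{-t}`. The coefficients `((1/2)_n / n!)²` of
`F(1/2, 1/2; 1; ·)` are at most `1/(n + 1)`, so `F(m) ≤ 1 - log (1 - m) ≤ 1 + t`, whence
`|K1(x,t)| ≤ (1 + t) ((1 + e^t)(1 + e^t - x))^{-1/2}`. Since `∫_0^a (c - x)^{-α} dx ≤ a c^{-α} / (1 - α)`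
for `0 ≤ α < 1`, this gives `∫ |K1|^ρ ≤ ((1 + t) / (1 + e^t))^ρ (e^t - 1) / (1 - ρ/2)`, and
`(e^t - 1)^{1/ρ} / e^t` is exactly `(e^t - 1)^{1/ρ - 1} (1 - e^{-t})`; so `C = (1 - ρ/2)^{-1/ρ}`.
-/

open Nat in
lemma risingFactorial_one (n : ℕ) : risingFactorial 1 n = n ! := by
  induction n with
  | zero => simp [risingFactorial]
  | succ n ih => rw [risingFactorial, ih, factorial_succ]; push_cast; ring

lemma risingFactorial_nonneg {q : ℝ} (hq : 0 ≤ q) (n : ℕ) : 0 ≤ risingFactorial q n := by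
  induction n with
  | zero => simp [risingFactorial]
  | succ n ih => rw [risingFactorial]; positivity

open Nat in
lemma risingFactorial_half_sq_mul_le (n : ℕ) :
    risingFactorial (1 / 2) n ^ 2 * (n + 1) ≤ (n ! : ℝ) ^ 2 := by
  induction n with
  | zero => simp [risingFactorial]
  | succ n ih =>
    have hn : (0 : ℝ) ≤ n := n.cast_nonneg
    rw [risingFactorial, factorial_succ]
    push_cast
    calc (risingFactorial (1 / 2) n * (1 / 2 + n)) ^ 2 * ((n : ℝ) + 1 + 1)
        = risingFactorial (1 / 2) n ^ 2 * ((1 / 2 + n) ^ 2 * (n + 1 + 1)) := by ring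
      _ ≤ risingFactorial (1 / 2) n ^ 2 * ((n + 1) * (n + 1) ^ 2) :=
          mul_le_mul_of_nonneg_left (by nlinarith) (sq_nonneg _)
      _ = risingFactorial (1 / 2) n ^ 2 * (n + 1) * (n + 1) ^ 2 := by ring
      _ ≤ (n ! : ℝ) ^ 2 * (n + 1) ^ 2 := by gcongr
      _ = (((n : ℝ) + 1) * n !) ^ 2 := by ring

open Nat in
/-- `F(1/2, 1/2; 1; k²) = (2/π) K(k)` for the complete elliptic integral `K`. -/
noncomputable def ellipticKCoeff (n : ℕ) : ℝ :=
  risingFactorial (1 / 2) n * risingFactorial (1 / 2) n / (risingFactorial 1 n * n !)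

lemma hyperF_half_half_one (m : ℝ) :
    hyperF (1 / 2) (1 / 2) 1 m = ∑' n, ellipticKCoeff n * m ^ n := rfl

lemma ellipticKCoeff_nonneg (n : ℕ) : 0 ≤ ellipticKCoeff n := by
  have := risingFactorial_nonneg (q := 1 / 2) (by norm_num) n
  rw [ellipticKCoeff, risingFactorial_one]
  positivity

lemma ellipticKCoeff_le (n : ℕ) : ellipticKCoeff n ≤ 1 / (n + 1) := by
  rw [ellipticKCoeff, risingFactorial_one, div_le_div_iff₀ (by positivity) (by positivity)]
  nlinarith [risingFactorial_half_sq_mul_le n]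

lemma hyperF_half_half_one_nonneg {m : ℝ} (hm : 0 ≤ m) : 0 ≤ hyperF (1 / 2) (1 / 2) 1 m :=
  tsum_nonneg fun n => mul_nonneg (ellipticKCoeff_nonneg n) (pow_nonneg hm n)

lemma hyperF_half_half_one_le {m : ℝ} (h0 : 0 ≤ m) (h1 : m < 1) :
    hyperF (1 / 2) (1 / 2) 1 m ≤ 1 - log (1 - m) := by
  have hlog := hasSum_pow_div_log_of_abs_lt_one (abs_lt.2 ⟨by linarith, h1⟩)
  have hterm (n : ℕ) : ellipticKCoeff (n + 1) * m ^ (n + 1) ≤ m ^ (n + 1) / (n + 1) := by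
    have hc : ellipticKCoeff (n + 1) ≤ 1 / (n + 1) :=
      (ellipticKCoeff_le (n + 1)).trans (by gcongr; linarith)
    calc ellipticKCoeff (n + 1) * m ^ (n + 1) ≤ 1 / (n + 1) * m ^ (n + 1) :=
          mul_le_mul_of_nonneg_right hc (pow_nonneg h0 _)
      _ = m ^ (n + 1) / (n + 1) := by ring
  have hsum : Summable fun n => ellipticKCoeff (n + 1) * m ^ (n + 1) :=
    hlog.summable.of_nonneg_of_le
      (fun n => mul_nonneg (ellipticKCoeff_nonneg _) (pow_nonneg h0 _)) hterm
  have hcoeff0 : ellipticKCoeff 0 = 1 := by simp [ellipticKCoeff, risingFactorial]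
  have hsum' : Summable fun n => ellipticKCoeff n * m ^ n :=
    (summable_nat_add_iff (f := fun n => ellipticKCoeff n * m ^ n) 1).1 hsum
  rw [hyperF_half_half_one, hsum'.tsum_eq_zero_add, hcoeff0, pow_zero, one_mul, sub_eq_add_neg,
    ← hlog.tsum_eq]
  exact add_le_add_right (hsum.tsum_le_tsum hterm hlog.summable) 1

lemma abs_K1_le {x t : ℝ} (hx : |x| ≤ exp t - 1) :
    |K1 x t| ≤ (1 + t) * ((1 + exp t) ^ 2 - x ^ 2) ^ (-(1 : ℝ) / 2) := by
  have hE : 1 ≤ exp t := by linarith [abs_nonneg x]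
  have hx2 : x ^ 2 ≤ (exp t - 1) ^ 2 := by
    simpa only [sq_abs] using pow_le_pow_left₀ (abs_nonneg x) hx 2
  have hD : 0 < (exp t + 1) ^ 2 - x ^ 2 := by nlinarith
  set m := ((exp t - 1) ^ 2 - x ^ 2) / ((exp t + 1) ^ 2 - x ^ 2) with hm
  have hm0 : 0 ≤ m := div_nonneg (by linarith) hD.le
  have h1m : 1 - m = 4 * exp t / ((exp t + 1) ^ 2 - x ^ 2) := by
    rw [hm]; field_simp; ring
  have hm1 : m < 1 := by
    have : 0 < 1 - m := by rw [h1m]; positivity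
    linarith
  have hlog : -t ≤ log (1 - m) := by
    rw [← log_exp (-t)]
    refine log_le_log (exp_pos _) ?_
    rw [h1m, exp_neg, inv_eq_one_div, div_le_div_iff₀ (exp_pos t) hD]
    nlinarith
  have hF : hyperF (1 / 2) (1 / 2) 1 m ≤ 1 + t := by
    linarith [hyperF_half_half_one_le hm0 hm1]
  have hP : 0 ≤ ((1 + exp t) ^ 2 - x ^ 2) ^ (-(1 : ℝ) / 2) := rpow_nonneg (by nlinarith) _
  rw [K1, abs_of_nonneg (mul_nonneg hP (hyperF_half_half_one_nonneg hm0)), mul_comm]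
  exact mul_le_mul_of_nonneg_right hF hP

lemma integral_sub_rpow_neg_le {α a c : ℝ} (hα0 : 0 ≤ α) (hα1 : α < 1) (ha : 0 ≤ a)
    (hac : a < c) : ∫ x in (0 : ℝ)..a, (c - x) ^ (-α) ≤ a * c ^ (-α) / (1 - α) := by
  have hc : 0 < c := ha.trans_lt hac
  have hca : 0 < c - a := sub_pos.2 hac
  rw [intervalIntegral.integral_comp_sub_left (fun u => u ^ (-α)) c, sub_zero,
    integral_rpow (Or.inl (by linarith)), sub_eq_neg_add 1 α,
    div_le_div_iff_of_pos_right (by linarith), rpow_add_one hc.ne', rpow_add_one hca.ne']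
  have : c ^ (-α) ≤ (c - a) ^ (-α) := rpow_le_rpow_of_nonpos hca (by linarith) (by linarith)
  nlinarith

lemma abs_K1_rpow_le {x t ρ : ℝ} (hρ : 0 ≤ ρ) (hx0 : 0 ≤ x) (hx : x ≤ exp t - 1) :
    |K1 x t| ^ ρ ≤ (1 + t) ^ ρ * (1 + exp t) ^ (-(ρ / 2)) * (1 + exp t - x) ^ (-(ρ / 2)) := by
  have hpos : 0 < 1 + exp t - x := by linarith
  have hprod : (1 + exp t) * (1 + exp t - x) ≤ (1 + exp t) ^ 2 - x ^ 2 := by nlinarith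
  have hD : 0 ≤ (1 + exp t) ^ 2 - x ^ 2 := (mul_nonneg (by positivity) hpos.le).trans hprod
  have ht : 0 ≤ 1 + t := by linarith [one_le_exp_iff.1 (by linarith : 1 ≤ exp t)]
  calc |K1 x t| ^ ρ ≤ ((1 + t) * ((1 + exp t) ^ 2 - x ^ 2) ^ (-(1 : ℝ) / 2)) ^ ρ :=
        rpow_le_rpow (abs_nonneg _) (abs_K1_le (by rwa [abs_of_nonneg hx0])) hρ
    _ = (1 + t) ^ ρ * ((1 + exp t) ^ 2 - x ^ 2) ^ (-(ρ / 2)) := by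
        rw [mul_rpow ht (rpow_nonneg hD _), ← rpow_mul hD]
        ring_nf
    _ ≤ (1 + t) ^ ρ * ((1 + exp t) * (1 + exp t - x)) ^ (-(ρ / 2)) :=
        mul_le_mul_of_nonneg_left
          (rpow_le_rpow_of_nonpos (mul_pos (by positivity) hpos) hprod (by linarith))
          (rpow_nonneg ht _)
    _ = _ := by rw [mul_rpow (by positivity) hpos.le, mul_assoc]

lemma integral_abs_K1_rpow_le {t ρ : ℝ} (ht : 0 ≤ t) (hρ0 : 0 ≤ ρ) (hρ2 : ρ < 2) :
    ∫ x in (0 : ℝ)..exp t - 1, |K1 x t| ^ ρ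
      ≤ ((1 + t) / (1 + exp t)) ^ ρ * (exp t - 1) / (1 - ρ / 2) := by
  have ha : 0 ≤ exp t - 1 := by linarith [one_le_exp ht]
  set g := fun x => (1 + t) ^ ρ * (1 + exp t) ^ (-(ρ / 2)) * (1 + exp t - x) ^ (-(ρ / 2))
  have hg : IntervalIntegrable g volume 0 (exp t - 1) := by
    have h := (intervalIntegral.intervalIntegrable_rpow' (a := 1 + exp t) (b := 2)
      (r := -(ρ / 2)) (by linarith)).comp_sub_left (1 + exp t)
    rw [sub_self, show 1 + exp t - 2 = exp t - 1 by ring] at h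
    exact h.const_mul _
  calc ∫ x in (0 : ℝ)..exp t - 1, |K1 x t| ^ ρ ≤ ∫ x in (0 : ℝ)..exp t - 1, g x := by
        -- `integral_mono_of_nonneg` needs integrability of the majorant only
        rw [intervalIntegral.integral_of_le ha, intervalIntegral.integral_of_le ha]
        refine integral_mono_of_nonneg (ae_of_all _ fun x => rpow_nonneg (abs_nonneg _) _)
          hg.1 ((ae_restrict_iff' measurableSet_Ioc).2 (ae_of_all _ fun x hx => ?_))
        exact abs_K1_rpow_le hρ0 hx.1.le hx.2
    _ = (1 + t) ^ ρ * (1 + exp t) ^ (-(ρ / 2))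
          * ∫ x in (0 : ℝ)..exp t - 1, (1 + exp t - x) ^ (-(ρ / 2)) :=
        intervalIntegral.integral_const_mul _ _
    _ ≤ (1 + t) ^ ρ * (1 + exp t) ^ (-(ρ / 2))
          * ((exp t - 1) * (1 + exp t) ^ (-(ρ / 2)) / (1 - ρ / 2)) := by
        gcongr
        exact integral_sub_rpow_neg_le (by linarith) (by linarith) ha (by linarith)
    _ = _ := by
        have hE : 0 < 1 + exp t := by positivity
        have hsq : (1 + exp t) ^ (-(ρ / 2)) * (1 + exp t) ^ (-(ρ / 2)) = ((1 + exp t) ^ ρ)⁻¹ := by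
          rw [← rpow_add hE, ← rpow_neg hE.le]
          ring_nf
        rw [div_rpow (by linarith) hE.le, div_eq_mul_inv _ ((1 + exp t) ^ ρ), ← hsq]
        ring

theorem statement15 (ρ : ℝ) (hρ1 : 1 ≤ ρ) (hρ2 : ρ < 2) :
    ∃ C > 0, ∀ t : ℝ, 0 < t →
      (∫ x in (0 : ℝ)..(Real.exp t - 1), |K1 x t| ^ ρ) ^ (1 / ρ)
        ≤ C * (1 + t) * (Real.exp t - 1) ^ (1 / ρ - 1) * (1 - Real.exp (-t)) := by
  have hρ0 : 0 < ρ := by linarith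
  have hβ : 0 < 1 - ρ / 2 := by linarith
  refine ⟨(1 - ρ / 2)⁻¹ ^ (1 / ρ), by positivity, fun t ht => ?_⟩
  have ha : 0 < exp t - 1 := by linarith [add_one_lt_exp ht.ne']
  have hI : 0 ≤ ∫ x in (0 : ℝ)..exp t - 1, |K1 x t| ^ ρ :=
    intervalIntegral.integral_nonneg ha.le fun x _ => rpow_nonneg (abs_nonneg _) _
  calc (∫ x in (0 : ℝ)..exp t - 1, |K1 x t| ^ ρ) ^ (1 / ρ)
      ≤ (((1 + t) / (1 + exp t)) ^ ρ * (exp t - 1) / (1 - ρ / 2)) ^ (1 / ρ) :=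
        rpow_le_rpow hI (integral_abs_K1_rpow_le ht.le hρ0.le hρ2) (by positivity)
    _ = (1 - ρ / 2)⁻¹ ^ (1 / ρ) * (1 + t) * ((exp t - 1) ^ (1 / ρ) / (1 + exp t)) := by
        rw [div_eq_mul_inv, mul_rpow (by positivity) (inv_pos.2 hβ).le,
          mul_rpow (by positivity) ha.le, ← rpow_mul (by positivity), mul_one_div_cancel hρ0.ne',
          rpow_one]
        ring
    _ ≤ (1 - ρ / 2)⁻¹ ^ (1 / ρ) * (1 + t) * ((exp t - 1) ^ (1 / ρ) / exp t) := by
        gcongr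
        linarith
    _ = (1 - ρ / 2)⁻¹ ^ (1 / ρ) * (1 + t) * (exp t - 1) ^ (1 / ρ - 1) * (1 - exp (-t)) := by
        rw [rpow_sub_one ha.ne', exp_neg]
        field_simp
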